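/- Let λ ∈ C ∩ X and let w ∈ W_p be such that w·λ ∈ C_I ∩ X₊ and d(w·λ) > 0. Then there exists β ∈ Φ⁺ ∖ ℤI such that n_β(w·λ) ≠ 0 and the hyperplane H_{β, n_β(w·λ)} contains a wall of the alcove containing w·λ. -/

import Mathlib

noncomputable section

/-- The real vector space `X ⊗ ℝ`, where `X` is a free abelian group of rank `r`. -/
abbrev Vr (r : ℕ) := Fin r → ℝ

/-- The lattice `X` (identified with `ℤ^r`); its dual lattice `Y` is identified with
the same coordinate lattice via the standard perfect pairing. -/
abbrev Lr (r : ℕ) := Fin r → ℤ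

/-- The embedding `X → X ⊗ ℝ`. -/
def toV {r : ℕ} (x : Lr r) : Vr r := fun i => (x i : ℝ)

/-- The perfect pairing `⟨·,·⟩ : X × Y → ℤ`. -/
def pairZ {r : ℕ} (x y : Lr r) : ℤ := ∑ i, x i * y i

/-- The real extension of the pairing to `(X ⊗ ℝ) × Y → ℝ`. -/
def pairR {r : ℕ} (v : Vr r) (y : Lr r) : ℝ := ∑ i, v i * (y i : ℝ)

/-- The subgroup `ℤI` of `X` generated by a subset `I ⊆ X`. -/
def ZI {r : ℕ} (I : Finset (Lr r)) : AddSubgroup (Lr r) :=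
  AddSubgroup.closure (I : Set (Lr r))

/-- The data of a reduced crystallographic root system `Φ ⊆ X` with a fixed positive
system `Φ⁺`, simple roots `Φ_s`, coroots `α∨ ∈ Y`, a prime `p`, and the half-sum
`ρ ∈ X` of the positive roots. -/
structure ARDatum (r : ℕ) where
  Φ : Finset (Lr r)
  pos : Finset (Lr r)
  simples : Finset (Lr r)
  coroot : Lr r → Lr r
  p : ℕ
  ρ : Lr r
  hp : p.Prime
  root_ne_zero : ∀ α ∈ Φ, α ≠ 0
  pos_sub : pos ⊆ Φ
  simples_sub : simples ⊆ pos
  pos_or_neg : ∀ α ∈ Φ, α ∈ pos ∨ -α ∈ pos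
  not_pos_and_neg : ∀ α ∈ pos, -α ∉ pos
  neg_mem : ∀ α ∈ Φ, -α ∈ Φ
  root_coroot_two : ∀ α ∈ Φ, pairZ α (coroot α) = 2
  reflect_root_mem : ∀ α ∈ Φ, ∀ β ∈ Φ, β - pairZ β (coroot α) • α ∈ Φ
  reflect_coroot_mem : ∀ α ∈ Φ, ∀ β ∈ Φ,
    coroot β - pairZ α (coroot β) • coroot α ∈ coroot '' (Φ : Set (Lr r))
  reduced : ∀ α ∈ Φ, ∀ c : ℤ, c • α ∈ Φ → c = 1 ∨ c = -1
  pos_sum_simples : ∀ β ∈ pos, ∃ c : Lr r → ℕ, β = ∑ α ∈ simples, (c α : ℤ) • α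
  two_rho : (2 : ℤ) • ρ = ∑ α ∈ pos, α

namespace ARDatum

/-- The group of affine transformations of `X ⊗ ℝ`. -/
abbrev G (r : ℕ) := (Vr r) ≃ᵃ[ℝ] (Vr r)

variable {r : ℕ} (D : ARDatum r)

/-- `g` is the affine reflection `s_{α,mp} : v ↦ v − (⟨v,α∨⟩ − mp)·α`. -/
def IsRefl (α : Lr r) (m : ℤ) (g : G r) : Prop :=
  ∀ v : Vr r, g v = v - (pairR v (D.coroot α) - (m : ℝ) * (D.p : ℝ)) • toV α

/-- `g` is the linear reflection `s_α : v ↦ v − ⟨v,α∨⟩·α`. -/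
def IsLinRefl (α : Lr r) (g : G r) : Prop := D.IsRefl α 0 g

/-- `g` is the translation `t_{α,mp} : v ↦ v + mp·α`. -/
def IsTransl (α : Lr r) (m : ℤ) (g : G r) : Prop :=
  ∀ v : Vr r, g v = v + ((m : ℝ) * (D.p : ℝ)) • toV α

/-- The affine Weyl group `W_p`, generated by the `s_α` and the `t_{α,mp}`
for `α ∈ Φ⁺`, `m ∈ ℤ`. -/
def Wp : Subgroup (G r) :=
  Subgroup.closure ({g | ∃ α ∈ D.pos, D.IsLinRefl α g} ∪
    {g | ∃ α ∈ D.pos, ∃ m : ℤ, D.IsTransl α m g})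

/-- The finite Weyl group `W`, generated by the `s_α` for `α ∈ Φ⁺`. -/
def W : Subgroup (G r) :=
  Subgroup.closure {g | ∃ α ∈ D.pos, D.IsLinRefl α g}

/-- The subgroup `W_{I,p}` generated by the `s_α` and `t_{α,mp}` for `α ∈ I`. -/
def WIp (I : Finset (Lr r)) : Subgroup (G r) :=
  Subgroup.closure ({g | ∃ α ∈ I, D.IsLinRefl α g} ∪
    {g | ∃ α ∈ I, ∃ m : ℤ, D.IsTransl α m g})

/-- The subgroup `W_I` of `W` generated by the `s_α` for `α ∈ I`. -/
def WI (I : Finset (Lr r)) : Subgroup (G r) :=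
  Subgroup.closure {g | ∃ α ∈ I, D.IsLinRefl α g}

/-- `g` is a reflection (the reflections of `W_p` are exactly the `s_{α,mp}`). -/
def IsReflection (g : G r) : Prop := ∃ α ∈ D.pos, ∃ m : ℤ, D.IsRefl α m g

/-- The dot action `w·v := w(v+ρ) − ρ`. -/
def dot (g : G r) (v : Vr r) : Vr r := g (v + toV D.ρ) - toV D.ρ

/-- The hyperplane `H_{α,n} = {v : ⟨v+ρ,α∨⟩ = np}`. -/
def Hyp (α : Lr r) (n : ℤ) : Set (Vr r) :=
  {v | pairR (v + toV D.ρ) (D.coroot α) = (n : ℝ) * (D.p : ℝ)}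

/-- The complement of the union of all the hyperplanes `H_{α,n}`. -/
def Reg : Set (Vr r) :=
  {v | ∀ α ∈ D.pos, ∀ n : ℤ, pairR (v + toV D.ρ) (D.coroot α) ≠ (n : ℝ) * (D.p : ℝ)}

/-- The alcove containing `v` (the connected component of `v` in the complement of
the hyperplanes). -/
def alcoveOf (v : Vr r) : Set (Vr r) := connectedComponentIn D.Reg v

/-- `H_{α,n}` contains a wall of `A`, i.e. the interior of `closure A ∩ H_{α,n}`
inside the hyperplane `H_{α,n}` is nonempty. -/
def HasWall (A : Set (Vr r)) (α : Lr r) (n : ℤ) : Prop :=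
  ∃ x ∈ closure A ∩ D.Hyp α n, ∃ ε > 0,
    ∀ y ∈ D.Hyp α n, dist y x < ε → y ∈ closure A

/-- The fundamental alcove `C`. -/
def FundC : Set (Vr r) :=
  {v | ∀ α ∈ D.pos, 0 < pairR (v + toV D.ρ) (D.coroot α) ∧
    pairR (v + toV D.ρ) (D.coroot α) < (D.p : ℝ)}

/-- The closure `C̄` of the fundamental alcove. -/
def FundCBar : Set (Vr r) :=
  {v | ∀ α ∈ D.pos, 0 ≤ pairR (v + toV D.ρ) (D.coroot α) ∧
    pairR (v + toV D.ρ) (D.coroot α) ≤ (D.p : ℝ)}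

/-- The region `C_I`. -/
def CI (I : Finset (Lr r)) : Set (Vr r) :=
  {v | ∀ α ∈ D.pos, α ∈ ZI I → 0 < pairR (v + toV D.ρ) (D.coroot α) ∧
    pairR (v + toV D.ρ) (D.coroot α) < (D.p : ℝ)}

/-- The region `C̄_I`. -/
def CIBar (I : Finset (Lr r)) : Set (Vr r) :=
  {v | ∀ α ∈ D.pos, α ∈ ZI I → 0 ≤ pairR (v + toV D.ρ) (D.coroot α) ∧
    pairR (v + toV D.ρ) (D.coroot α) ≤ (D.p : ℝ)}

/-- `S_p`: the reflections of `W_p` in the walls of the fundamental alcove `C`. -/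
def Sp : Set (G r) :=
  {g | g ∈ D.Wp ∧ ∃ α ∈ D.pos, ∃ m : ℤ, D.IsRefl α m g ∧ D.HasWall D.FundC α m}

/-- One step of the order `⪯` (`↑`): `s_{α,mp}·u ⪯ u` whenever `⟨u+ρ,α∨⟩ ≥ mp`. -/
def UpStep (v u : Vr r) : Prop :=
  ∃ α ∈ D.pos, ∃ m : ℤ, (m : ℝ) * (D.p : ℝ) ≤ pairR (u + toV D.ρ) (D.coroot α) ∧
    v = u - (pairR (u + toV D.ρ) (D.coroot α) - (m : ℝ) * (D.p : ℝ)) • toV α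

/-- The order `⪯` (`↑`): the reflexive-transitive closure of `UpStep`. -/
def Up : Vr r → Vr r → Prop := Relation.ReflTransGen D.UpStep

/-- The strict order `≺`. -/
def Ups (v u : Vr r) : Prop := D.Up v u ∧ v ≠ u

/-- The order `≤`: `v ≤ u` iff `u − v` is a `ℤ≥0`-combination of the simple roots. -/
def Le (v u : Vr r) : Prop :=
  ∃ c : Lr r → ℕ, u - v = ∑ α ∈ D.simples, (c α : ℝ) • toV α

/-- The strict order `<`. -/
def Lt (v u : Vr r) : Prop := D.Le v u ∧ v ≠ u

/-- `X₊ = {ν ∈ X : ⟨ν+ρ,α∨⟩ ≥ 0 for all α ∈ Φ⁺}`, viewed inside `X ⊗ ℝ`. -/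
def XplusR : Set (Vr r) :=
  {v | (∃ ν : Lr r, toV ν = v) ∧ ∀ α ∈ D.pos, 0 ≤ pairR (v + toV D.ρ) (D.coroot α)}

/-- `n_α(v)`: the unique integer with `n_α(v)·p < ⟨v+ρ,α∨⟩ < (n_α(v)+1)·p`
(for `v` on none of the hyperplanes), realised as a floor. -/
def nfl (v : Vr r) (α : Lr r) : ℤ := ⌊pairR (v + toV D.ρ) (D.coroot α) / (D.p : ℝ)⌋

/-- `d(v) = ∑_{α ∈ Φ⁺} n_α(v)`. -/
def dfn (v : Vr r) : ℤ := ∑ α ∈ D.pos, D.nfl v α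

/-- The sublattice `pX` of `X`. -/
def pLat : AddSubgroup (Lr r) where
  carrier := {x | ∃ y : Lr r, x = (D.p : ℤ) • y}
  zero_mem' := ⟨0, by simp⟩
  add_mem' := by rintro a b ⟨y, rfl⟩ ⟨z, rfl⟩; exact ⟨y + z, (smul_add _ _ _).symm⟩
  neg_mem' := by rintro a ⟨y, rfl⟩; exact ⟨-y, (smul_neg _ _).symm⟩

/-- The orbit of `ν + pX` under the dot action of `W_I` on `X/pX`. -/
def dotOrbit (I : Finset (Lr r)) (ν : Lr r) : Set (Lr r ⧸ D.pLat) :=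
  {c | ∃ w ∈ D.WI I, ∃ ν' : Lr r, toV ν' = D.dot w (toV ν) ∧
    c = QuotientAddGroup.mk ν'}

end ARDatum

/-!
The alcove of `μ = w·λ` is the box `n_α p < ⟨z+ρ,α∨⟩ < (n_α+1)p` with `n = n(μ)`, where all
`n_α ≥ 0` because `μ ∈ X₊` and some `n_α ≥ 1` because `d(μ) > 0`. Walk from `μ` straight towards
a point `c` of the fundamental alcove: only the lower walls `H_{α,n_α}` with `n_α ≥ 1` can be
crossed. For generic `c` the first crossing lies on a single hyperplane `H_{β,n_β}` (distinct
positive roots have non-proportional coroots), and every point of `H_{β,n_β}` near it is a limit of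
points of the box, so `H_{β,n_β}` contains a wall. Finally `β ∉ ℤI`, since `μ ∈ C_I` forces
`n_γ = 0` for `γ ∈ ℤI`.
-/

open Finset Filter Topology

section DotProduct

variable {n : Type*} [Fintype n]

theorem dense_setOf_dotProduct_ne {w : n → ℝ} (hw : w ≠ 0) (e : ℝ) :
    Dense {c : n → ℝ | c ⬝ᵥ w ≠ e} := by
  intro x
  by_cases hx : x ⬝ᵥ w = e
  · have hww : w ⬝ᵥ w ≠ 0 := fun h => hw (dotProduct_self_eq_zero.1 h)
    have hlim : Tendsto (fun t : ℝ => x + t • w) (𝓝[≠] 0) (𝓝 x) := by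
      have hcont : Continuous fun t : ℝ => x + t • w := by fun_prop
      simpa using (hcont.tendsto 0).mono_left nhdsWithin_le_nhds
    refine mem_closure_of_tendsto hlim (eventually_nhdsWithin_of_forall fun t ht => ?_)
    simpa [add_dotProduct, hx, hww] using ht
  · exact subset_closure hx

theorem exists_mem_forall_dotProduct_ne {ι : Type*} (s : Finset ι) {w : ι → n → ℝ}
    (hw : ∀ i ∈ s, w i ≠ 0) (e : ι → ℝ) {U : Set (n → ℝ)} (hU : IsOpen U) (hne : U.Nonempty) :
    ∃ c ∈ U, ∀ i ∈ s, c ⬝ᵥ w i ≠ e i := by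
  have hopen : ∀ i ∈ (s : Set ι), IsOpen {c : n → ℝ | c ⬝ᵥ w i ≠ e i} :=
    fun i _ => isOpen_ne_fun (by fun_prop) continuous_const
  obtain ⟨c, hcU, hc⟩ := (dense_biInter_of_isOpen hopen s.countable_toSet
    fun i hi => dense_setOf_dotProduct_ne (hw i hi) (e i)).inter_open_nonempty U hU hne
  exact ⟨c, hcU, by simpa using hc⟩

end DotProduct

theorem eq_zero_of_forall_add_nsmul_mem {M : Type*} [AddCommGroup M] [IsAddTorsionFree M]
    {s : Set M} (hs : s.Finite) {x v : M} (h : ∀ k : ℕ, x + k • v ∈ s) : v = 0 := by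
  by_contra hv
  refine (Set.infinite_of_injective_forall_mem (fun a b hab => ?_) h) hs
  have hab' : (a : ℤ) • v = (b : ℤ) • v := by simpa using hab
  exact_mod_cast smul_left_injective ℤ hv hab'

section Pairing

variable {r : ℕ}

theorem pairZ_eq_dotProduct (x y : Lr r) : pairZ x y = x ⬝ᵥ y := rfl

theorem pairR_eq_dotProduct (v : Vr r) (y : Lr r) : pairR v y = v ⬝ᵥ toV y := rfl

@[simp] theorem toV_neg (x : Lr r) : toV (-x) = -toV x := by
  funext i; simp [toV]

@[simp] theorem toV_sub (x y : Lr r) : toV (x - y) = toV x - toV y := by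
  funext i; simp [toV]

@[simp] theorem toV_zsmul (k : ℤ) (x : Lr r) : toV (k • x) = (k : ℝ) • toV x := by
  funext i; simp [toV]

theorem toV_dotProduct_toV (x y : Lr r) : toV x ⬝ᵥ toV y = (pairZ x y : ℝ) := by
  simp [toV, pairZ, dotProduct]

end Pairing

namespace ARDatum

variable {r : ℕ} (D : ARDatum r)

theorem coroot_neg {α : Lr r} (hα : α ∈ D.Φ) : D.coroot (-α) = -D.coroot α := by
  have hnα := D.neg_mem α hα
  have hd : α ⬝ᵥ D.coroot α = 2 := D.root_coroot_two α hα
  have hc : α ⬝ᵥ D.coroot (-α) = -2 := by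
    have := D.root_coroot_two (-α) hnα
    rw [pairZ_eq_dotProduct, neg_dotProduct] at this
    omega
  have hcd : α ⬝ᵥ (D.coroot (-α) + D.coroot α) = 0 := by rw [dotProduct_add, hc, hd]; rfl
  -- reflecting in `-α` and then in `α` translates each coroot `γ∨` with `⟨α, γ∨⟩ = 2`
  -- by `2((-α)∨ + α∨)`
  have step : ∀ y ∈ D.coroot '' D.Φ, α ⬝ᵥ y = 2 →
      y + 2 • (D.coroot (-α) + D.coroot α) ∈ D.coroot '' D.Φ := by
    rintro _ ⟨γ, hγ, rfl⟩ hγα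
    obtain ⟨γ', hγ', e'⟩ := D.reflect_coroot_mem (-α) hnα γ hγ
    obtain ⟨γ'', hγ'', e''⟩ := D.reflect_coroot_mem α hα γ' hγ'
    refine ⟨γ'', hγ'', ?_⟩
    simp only [pairZ_eq_dotProduct] at e' e''
    rw [e'', e']
    simp only [neg_dotProduct, dotProduct_sub, dotProduct_smul, hγα, hc, smul_eq_mul]
    module
  have orbit : ∀ k : ℕ, D.coroot α + k • (2 • (D.coroot (-α) + D.coroot α)) ∈ D.coroot '' D.Φ := by
    intro k
    induction k with
    | zero => simpa using ⟨α, hα, rfl⟩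
    | succ k ih =>
      rw [succ_nsmul, ← add_assoc]
      refine step _ ih ?_
      rw [dotProduct_add, dotProduct_smul, dotProduct_smul, hcd, hd]
      simp
  have h2 := eq_zero_of_forall_add_nsmul_mem (D.Φ.finite_toSet.image D.coroot) orbit
  rw [smul_eq_zero] at h2
  exact eq_neg_of_add_eq_zero_left (h2.resolve_left two_ne_zero)

theorem zsmul_eq_two_zsmul_of_pairZ_mul_pairZ_eq_four {α β : Lr r} (hα : α ∈ D.Φ) (hβ : β ∈ D.Φ)
    (h : pairZ α (D.coroot β) * pairZ β (D.coroot α) = 4) :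
    pairZ α (D.coroot β) • β = (2 : ℤ) • α := by
  have hαα := D.root_coroot_two α hα
  have hββ := D.root_coroot_two β hβ
  obtain ⟨m, hm⟩ : ∃ m, pairZ α (D.coroot β) = m := ⟨_, rfl⟩
  obtain ⟨m', hm'⟩ : ∃ m', pairZ β (D.coroot α) = m' := ⟨_, rfl⟩
  rw [hm, hm'] at h
  rw [hm, ← sub_eq_zero]
  -- `u` pairs to zero with both coroots, so `s_β s_α` translates `α` by `u` within `Φ`
  set u := m • β - (2 : ℤ) • α
  have huα : u ⬝ᵥ D.coroot α = 0 := by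
    rw [sub_dotProduct, smul_dotProduct, smul_dotProduct, ← pairZ_eq_dotProduct, hm',
      ← pairZ_eq_dotProduct, hαα, smul_eq_mul, h]
    rfl
  have huβ : u ⬝ᵥ D.coroot β = 0 := by
    rw [sub_dotProduct, smul_dotProduct, smul_dotProduct, ← pairZ_eq_dotProduct, hββ,
      ← pairZ_eq_dotProduct, hm, smul_eq_mul, smul_eq_mul, mul_comm, sub_self]
  refine eq_zero_of_forall_add_nsmul_mem D.Φ.finite_toSet (x := α) fun k => ?_
  induction k with
  | zero => simpa using hα
  | succ k ih =>
    have h1 : pairZ (α + k • u) (D.coroot α) = 2 := by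
      rw [pairZ_eq_dotProduct, add_dotProduct, smul_dotProduct, huα, ← pairZ_eq_dotProduct, hαα]
      rfl
    have h2 : pairZ (α + k • u - (2 : ℤ) • α) (D.coroot β) = -m := by
      rw [pairZ_eq_dotProduct, sub_dotProduct, add_dotProduct, smul_dotProduct, smul_dotProduct,
        huβ, ← pairZ_eq_dotProduct, hm]
      simp only [smul_zero, add_zero, smul_eq_mul]
      ring
    have := D.reflect_root_mem β hβ _ (h1 ▸ D.reflect_root_mem α hα _ ih)
    rw [h2] at this
    convert Finset.mem_coe.2 this using 2
    simp only [u]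
    module

theorem eq_of_smul_toV_coroot_eq {α β : Lr r} (hα : α ∈ D.Φ) (hβ : β ∈ D.Φ) {a b : ℝ}
    (ha : 0 < a) (hb : 0 < b) (h : a • toV (D.coroot α) = b • toV (D.coroot β)) : α = β := by
  obtain ⟨m, hm⟩ : ∃ m, pairZ α (D.coroot β) = m := ⟨_, rfl⟩
  obtain ⟨m', hm'⟩ : ∃ m', pairZ β (D.coroot α) = m' := ⟨_, rfl⟩
  have e1 : a * 2 = b * m := by
    simpa [dotProduct_smul, toV_dotProduct_toV, D.root_coroot_two α hα, hm]
      using congrArg (toV α ⬝ᵥ ·) h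
  have e2 : a * m' = b * 2 := by
    simpa [dotProduct_smul, toV_dotProduct_toV, D.root_coroot_two β hβ, hm']
      using congrArg (toV β ⬝ᵥ ·) h
  have hm0 : 0 < m := by exact_mod_cast (show (0 : ℝ) < m by nlinarith)
  have hm'0 : 0 < m' := by exact_mod_cast (show (0 : ℝ) < m' by nlinarith)
  have hmm' : m * m' = 4 := by
    have : b * (m * m') = b * 4 := by linear_combination -(m' : ℝ) * e1 + 2 * e2
    exact_mod_cast mul_left_cancel₀ hb.ne' this
  have hmβ : ∀ i, m * β i = 2 * α i := fun i => by
    simpa [hm] using congrFun (D.zsmul_eq_two_zsmul_of_pairZ_mul_pairZ_eq_four hα hβ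
      (by rw [hm, hm', hmm'])) i
  have hm4 : m ≤ 4 := by nlinarith
  interval_cases m
  · have := D.reduced α hα 2 (by convert hβ using 1; funext i; simp [← hmβ i])
    omega
  · funext i; linarith [hmβ i]
  · omega
  · have := D.reduced β hβ 2 (by convert hα using 1; funext i; simp; linarith [hmβ i])
    omega

abbrev hgt (v : Vr r) (α : Lr r) : ℝ := pairR (v + toV D.ρ) (D.coroot α)

theorem p_pos : (0 : ℝ) < D.p := by exact_mod_cast D.hp.pos

theorem dot_one (v : Vr r) : D.dot 1 v = v := by
  simp [dot]

theorem dot_mul (g h : G r) (v : Vr r) : D.dot (g * h) v = D.dot g (D.dot h v) := by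
  simp [dot]

theorem hgt_ne_of_mem_Reg {v : Vr r} (hv : v ∈ D.Reg) {α : Lr r} (hα : α ∈ D.Φ) (k : ℤ) :
    D.hgt v α ≠ k * D.p := by
  rcases D.pos_or_neg α hα with hpos | hneg
  · exact hv α hpos k
  · intro hk
    apply hv (-α) hneg (-k)
    change pairR _ _ = _ at hk
    rw [D.coroot_neg hα, pairR_eq_dotProduct, toV_neg, dotProduct_neg, ← pairR_eq_dotProduct, hk]
    push_cast
    ring

theorem hgt_dot_of_isLinRefl {α : Lr r} {x : G r} (hx : D.IsLinRefl α x) (v : Vr r) (y : Lr r) :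
    pairR (D.dot x v + toV D.ρ) y = pairR (v + toV D.ρ) (y - pairZ α y • D.coroot α) := by
  rw [dot, sub_add_cancel, hx]
  simp only [pairR_eq_dotProduct, sub_dotProduct, smul_dotProduct, toV_sub, toV_zsmul,
    dotProduct_sub, dotProduct_smul, toV_dotProduct_toV, Int.cast_zero, zero_mul, sub_zero,
    smul_eq_mul]
  ring

theorem dot_dot_of_isLinRefl {α : Lr r} (hα : α ∈ D.Φ) {x : G r} (hx : D.IsLinRefl α x)
    (v : Vr r) : D.dot x (D.dot x v) = v := by
  have h2 : toV α ⬝ᵥ toV (D.coroot α) = 2 := by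
    rw [toV_dotProduct_toV, D.root_coroot_two α hα]; norm_num
  simp only [dot, sub_add_cancel]
  rw [hx, hx]
  simp only [pairR_eq_dotProduct, sub_dotProduct, smul_dotProduct, h2, Int.cast_zero, zero_mul,
    sub_zero, smul_eq_mul]
  module

theorem dot_mem_Reg_of_isLinRefl {α : Lr r} (hα : α ∈ D.pos) {x : G r} (hx : D.IsLinRefl α x)
    {v : Vr r} (hv : v ∈ D.Reg) : D.dot x v ∈ D.Reg := by
  intro β hβ k
  obtain ⟨δ, hδ, hδβ⟩ := D.reflect_coroot_mem α (D.pos_sub hα) β (D.pos_sub hβ)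
  rw [D.hgt_dot_of_isLinRefl hx, ← hδβ]
  exact D.hgt_ne_of_mem_Reg hv hδ k

theorem dot_mem_Reg_iff_of_isTransl {α : Lr r} {m : ℤ} {x : G r} (hx : D.IsTransl α m x)
    (v : Vr r) : D.dot x v ∈ D.Reg ↔ v ∈ D.Reg := by
  have hshift : ∀ y, pairR (D.dot x v + toV D.ρ) y
      = pairR (v + toV D.ρ) y + (m * pairZ α y : ℤ) * D.p := by
    intro y
    rw [dot, sub_add_cancel, hx]
    simp only [pairR_eq_dotProduct, add_dotProduct, smul_dotProduct, toV_dotProduct_toV,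
      smul_eq_mul]
    push_cast
    ring
  refine forall₂_congr fun β _ => ⟨fun h k hk => h (k + m * pairZ α (D.coroot β)) ?_,
    fun h k hk => h (k - m * pairZ α (D.coroot β)) ?_⟩
  · rw [hshift, hk]; push_cast; ring
  · rw [hshift] at hk; push_cast at hk ⊢; linarith

theorem dot_mem_Reg_iff {g : G r} (hg : g ∈ D.Wp) (v : Vr r) : D.dot g v ∈ D.Reg ↔ v ∈ D.Reg := by
  induction hg using Subgroup.closure_induction generalizing v with
  | mem x hx =>
    rcases hx with ⟨α, hα, hx⟩ | ⟨α, hα, m, hx⟩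
    · refine ⟨fun h => ?_, D.dot_mem_Reg_of_isLinRefl hα hx⟩
      rw [← D.dot_dot_of_isLinRefl (D.pos_sub hα) hx v]
      exact D.dot_mem_Reg_of_isLinRefl hα hx h
    · exact D.dot_mem_Reg_iff_of_isTransl hx v
  | one => rw [D.dot_one]
  | mul x y _ _ hx hy => rw [D.dot_mul, hx, hy]
  | inv x _ hx => rw [← hx, ← D.dot_mul, mul_inv_cancel, D.dot_one]

def band (α : Lr r) (k : ℤ) : Set (Vr r) :=
  {z | (k : ℝ) * D.p < D.hgt z α ∧ D.hgt z α < ((k : ℝ) + 1) * D.p}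

/-- The alcove with coordinates `n_α`, or the empty set if no alcove has them. -/
def box (n : Lr r → ℤ) : Set (Vr r) := ⋂ α ∈ D.pos, D.band α (n α)

theorem hgt_add_smul (v u : Vr r) (s : ℝ) (α : Lr r) :
    D.hgt (v + s • u) α = D.hgt v α + s * (u ⬝ᵥ toV (D.coroot α)) := by
  simp only [hgt, pairR_eq_dotProduct, add_dotProduct, smul_dotProduct, smul_eq_mul]
  ring

theorem hgt_add_smul_sub (μ c : Vr r) (t : ℝ) (α : Lr r) :
    D.hgt (μ + t • (c - μ)) α = D.hgt μ α - t * (D.hgt μ α - D.hgt c α) := by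
  simp only [hgt, pairR_eq_dotProduct, add_dotProduct, smul_dotProduct, sub_dotProduct,
    smul_eq_mul]
  ring

theorem continuous_hgt (α : Lr r) : Continuous fun v => D.hgt v α := by
  simp only [hgt, pairR_eq_dotProduct]
  fun_prop

theorem isOpen_band (α : Lr r) (k : ℤ) : IsOpen (D.band α k) :=
  (isOpen_lt continuous_const (D.continuous_hgt α)).inter
    (isOpen_lt (D.continuous_hgt α) continuous_const)

theorem convex_band (α : Lr r) (k : ℤ) : Convex ℝ (D.band α k) := by
  intro x hx y hy a b ha hb hab
  have hcomb : D.hgt (a • x + b • y) α = a * D.hgt x α + b * D.hgt y α := by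
    simp only [hgt, pairR_eq_dotProduct, add_dotProduct, smul_dotProduct, smul_eq_mul]
    linear_combination -(toV D.ρ ⬝ᵥ toV (D.coroot α)) * hab
  have := convex_Ioo _ _ hx hy ha hb hab
  rwa [smul_eq_mul, smul_eq_mul, ← hcomb] at this

theorem hgt_ne_of_mem_band {z : Vr r} {α : Lr r} {k : ℤ} (hz : z ∈ D.band α k) (m : ℤ) :
    D.hgt z α ≠ m * D.p := by
  intro h
  obtain ⟨hlo, hhi⟩ := hz
  rw [h] at hlo hhi
  have h1 : (k : ℝ) < m := lt_of_mul_lt_mul_right hlo D.p_pos.le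
  have h2 : (m : ℝ) < k + 1 := lt_of_mul_lt_mul_right hhi D.p_pos.le
  norm_cast at h1 h2
  omega

theorem isOpen_box (n : Lr r → ℤ) : IsOpen (D.box n) :=
  isOpen_biInter_finset fun α _ => D.isOpen_band α (n α)

theorem box_subset_Reg (n : Lr r → ℤ) : D.box n ⊆ D.Reg :=
  fun _ hz α hα => D.hgt_ne_of_mem_band (Set.mem_iInter₂.1 hz α hα)

theorem box_subset_alcoveOf {n : Lr r → ℤ} {μ : Vr r} (hμ : μ ∈ D.box n) :
    D.box n ⊆ D.alcoveOf μ :=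
  (convex_iInter₂ fun α _ => D.convex_band α (n α)).isPreconnected.subset_connectedComponentIn
    hμ (D.box_subset_Reg n)

theorem FundC_eq_box_zero : D.FundC = D.box 0 := by
  ext v
  simp [FundC, box, band]

theorem mem_box_nfl {v : Vr r} (hv : v ∈ D.Reg) : v ∈ D.box (D.nfl v) :=
  Set.mem_iInter₂.2 fun α hα =>
    ⟨lt_of_le_of_ne ((le_div_iff₀ D.p_pos).1 (Int.floor_le _)) (hv α hα _).symm,
      (div_lt_iff₀ D.p_pos).1 (Int.lt_floor_add_one _)⟩

theorem nfl_nonneg {v : Vr r} {α : Lr r} (h : 0 ≤ D.hgt v α) : 0 ≤ D.nfl v α :=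
  Int.floor_nonneg.2 (div_nonneg h D.p_pos.le)

theorem nfl_eq_zero {v : Vr r} {α : Lr r} (h0 : 0 ≤ D.hgt v α) (hp : D.hgt v α < D.p) :
    D.nfl v α = 0 :=
  Int.floor_eq_zero_iff.2 ⟨div_nonneg h0 D.p_pos.le, (div_lt_one D.p_pos).2 hp⟩

variable {D} in
theorem HasWall.mono {A B : Set (Vr r)} {α : Lr r} {k : ℤ} (h : D.HasWall A α k) (hAB : A ⊆ B) :
    D.HasWall B α k := by
  obtain ⟨x, ⟨hxA, hx⟩, ε, hε, hball⟩ := h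
  exact ⟨x, ⟨closure_mono hAB hxA, hx⟩, ε, hε, fun y hy hyx => closure_mono hAB (hball y hy hyx)⟩

theorem hasWall_box {n : Lr r → ℤ} {β : Lr r} (hβ : β ∈ D.pos) {x : Vr r}
    (hx : x ∈ D.Hyp β (n β)) (hband : ∀ α ∈ D.pos, α ≠ β → x ∈ D.band α (n α)) :
    D.HasWall (D.box n) β (n β) := by
  set U := (⋂ α ∈ D.pos.erase β, D.band α (n α)) ∩ {z | D.hgt z β < (n β + 1) * D.p}
  have hUo : IsOpen U := (isOpen_biInter_finset fun α _ => D.isOpen_band α (n α)).inter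
    (isOpen_lt (D.continuous_hgt β) continuous_const)
  have hxU : x ∈ U := by
    refine ⟨Set.mem_iInter₂.2 fun α hα => hband α (mem_of_mem_erase hα) (ne_of_mem_erase hα), ?_⟩
    change D.hgt x β < _
    rw [show D.hgt x β = n β * D.p from hx]
    linarith [D.p_pos]
  obtain ⟨ε, hε, hball⟩ := Metric.isOpen_iff.1 hUo x hxU
  -- points of `H_{β,n_β}` near `x` are pushed into the box by a small step along `β`
  have hcl : ∀ y ∈ D.Hyp β (n β), dist y x < ε → y ∈ closure (D.box n) := by
    intro y hy hyx
    have hlim : Tendsto (fun s : ℝ => y + s • toV β) (𝓝[>] 0) (𝓝 y) := by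
      have hcont : Continuous fun s : ℝ => y + s • toV β := by fun_prop
      simpa using (hcont.tendsto 0).mono_left nhdsWithin_le_nhds
    refine mem_closure_of_tendsto hlim ?_
    filter_upwards [hlim (hUo.mem_nhds (hball hyx)), self_mem_nhdsWithin] with s hsU hs
    refine Set.mem_iInter₂.2 fun α hα => ?_
    by_cases hαβ : α = β
    · subst hαβ
      refine ⟨?_, hsU.2⟩
      rw [D.hgt_add_smul, show D.hgt y α = n α * D.p from hy, toV_dotProduct_toV,
        D.root_coroot_two α (D.pos_sub hα)]
      have : (0 : ℝ) < s := hs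
      push_cast
      linarith
    · exact Set.mem_iInter₂.1 hsU.1 α (mem_erase.2 ⟨hαβ, hα⟩)
  exact ⟨x, ⟨hcl x hx (by simpa using hε), hx⟩, ε, hε, hcl⟩

theorem exists_mem_forall_hgt_ne {S : Finset (Lr r)} (hS : S ⊆ D.Φ) {a : Lr r → ℝ}
    (ha : ∀ α ∈ S, 0 < a α) (e : Lr r → Lr r → ℝ) {U : Set (Vr r)} (hU : IsOpen U)
    (hne : U.Nonempty) :
    ∃ c ∈ U, ∀ α ∈ S, ∀ γ ∈ S, α ≠ γ → a α * D.hgt c γ - a γ * D.hgt c α ≠ e α γ := by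
  classical
  set pairs := {q ∈ S ×ˢ S | q.1 ≠ q.2}
  have hw : ∀ q ∈ pairs, a q.1 • toV (D.coroot q.2) - a q.2 • toV (D.coroot q.1) ≠ 0 := by
    rintro ⟨α, γ⟩ hq h
    simp only [pairs, mem_filter, mem_product] at hq
    exact hq.2 (D.eq_of_smul_toV_coroot_eq (hS hq.1.1) (hS hq.1.2) (ha γ hq.1.2) (ha α hq.1.1)
      (sub_eq_zero.1 h).symm)
  obtain ⟨c, hcU, hc⟩ := exists_mem_forall_dotProduct_ne pairs hw
    (fun q => e q.1 q.2 - (a q.1 * D.hgt 0 q.2 - a q.2 * D.hgt 0 q.1)) hU hne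
  refine ⟨c, hcU, fun α hα γ hγ hαγ h => hc (α, γ) (by simp [pairs, hα, hγ, hαγ]) ?_⟩
  simp only [hgt, pairR_eq_dotProduct, add_dotProduct, zero_add, dotProduct_sub,
    dotProduct_smul, smul_eq_mul] at h ⊢
  linarith

/-- `x` is the first point of the segment from `μ` to `c` lying on one of the hyperplanes
`H_{α,n_α}`; the hypothesis on `c` makes that hyperplane unique. -/
theorem exists_mem_Hyp_forall_ne_mem_band {n : Lr r → ℤ} {μ c : Vr r} (hμ : μ ∈ D.box n)
    (hc : c ∈ D.box 0) (hn : ∀ α ∈ D.pos, 0 ≤ n α) (hS : ∃ α ∈ D.pos, 0 < n α)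
    (hgen : ∀ α ∈ D.pos, ∀ γ ∈ D.pos, 0 < n α → 0 < n γ → α ≠ γ →
      (D.hgt μ α - n α * D.p) * (D.hgt μ γ - D.hgt c γ)
        ≠ (D.hgt μ γ - n γ * D.p) * (D.hgt μ α - D.hgt c α)) :
    ∃ β ∈ D.pos, 0 < n β ∧ ∃ x ∈ D.Hyp β (n β), ∀ α ∈ D.pos, α ≠ β → x ∈ D.band α (n α) := by
  classical
  set S := {α ∈ D.pos | 0 < n α}
  set A : Lr r → ℝ := fun α => D.hgt μ α - n α * D.p
  set Δ : Lr r → ℝ := fun α => D.hgt μ α - D.hgt c α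
  have hAΔ : ∀ α ∈ S, 0 < A α ∧ A α < Δ α := by
    intro α hα
    obtain ⟨hα, hnα⟩ := mem_filter.1 hα
    have hμα : n α * D.p < D.hgt μ α := (Set.mem_iInter₂.1 hμ α hα).1
    have hcα : D.hgt c α < D.p := by simpa using (Set.mem_iInter₂.1 hc α hα).2
    have : (1 : ℝ) ≤ n α := by exact_mod_cast hnα
    simp only [A, Δ]
    constructor <;> nlinarith [D.p_pos]
  obtain ⟨β, hβS, hmin⟩ := S.exists_min_image (fun α => A α / Δ α)
    (let ⟨α, hα, h⟩ := hS; ⟨α, mem_filter.2 ⟨hα, h⟩⟩)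
  obtain ⟨hβ, hnβ⟩ := mem_filter.1 hβS
  obtain ⟨hAβ, hAΔβ⟩ := hAΔ β hβS
  set T := A β / Δ β
  have hTΔ : T * Δ β = A β := div_mul_cancel₀ _ (by linarith)
  have hT : T ∈ Set.Icc (0 : ℝ) 1 :=
    ⟨div_nonneg hAβ.le (by linarith), (div_le_one₀ (by linarith)).2 hAΔβ.le⟩
  refine ⟨β, hβ, hnβ, μ + T • (c - μ), ?_, fun α hα hαβ => ?_⟩
  · change D.hgt _ β = _
    rw [D.hgt_add_smul_sub]
    linarith [hTΔ]
  rcases (hn α hα).eq_or_lt with hnα | hnα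
  · rw [← hnα]
    exact (D.convex_band α 0).add_smul_sub_mem (hnα ▸ Set.mem_iInter₂.1 hμ α hα)
      (Set.mem_iInter₂.1 hc α hα) hT
  -- `α` is crossed strictly later than `β`
  have hαS : α ∈ S := mem_filter.2 ⟨hα, hnα⟩
  obtain ⟨hAα, hAΔα⟩ := hAΔ α hαS
  have hTα : T < A α / Δ α := (hmin α hαS).lt_of_ne fun h => hgen β hβ α hα hnβ hnα (Ne.symm hαβ)
    ((div_eq_div_iff (by linarith) (by linarith)).1 h)
  have hμα : μ ∈ D.band α (n α) := Set.mem_iInter₂.1 hμ α hα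
  have hTΔα : T * Δ α < A α := (lt_div_iff₀ (by linarith)).1 hTα
  simp only [A, Δ] at hTΔα hAα
  refine ⟨?_, ?_⟩ <;> rw [D.hgt_add_smul_sub]
  · linarith
  · nlinarith [hμα.2, hT.1]

theorem exists_hasWall_box {n : Lr r → ℤ} {μ : Vr r} (hμ : μ ∈ D.box n)
    (hn : ∀ α ∈ D.pos, 0 ≤ n α) (hS : ∃ α ∈ D.pos, 0 < n α) (hC : (D.box 0).Nonempty) :
    ∃ β ∈ D.pos, 0 < n β ∧ D.HasWall (D.box n) β (n β) := by
  classical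
  set a : Lr r → ℝ := fun α => D.hgt μ α - n α * D.p
  obtain ⟨c, hc, hgen⟩ := D.exists_mem_forall_hgt_ne
    (S := {α ∈ D.pos | 0 < n α}) ((filter_subset _ _).trans D.pos_sub)
    (fun α hα => sub_pos.2 (Set.mem_iInter₂.1 hμ α (mem_filter.1 hα).1).1)
    (fun α γ => a α * D.hgt μ γ - a γ * D.hgt μ α) (D.isOpen_box 0) hC
  obtain ⟨β, hβ, hnβ, x, hx, hband⟩ := D.exists_mem_Hyp_forall_ne_mem_band hμ hc hn hS
    fun α hα γ hγ hnα hnγ hαγ h => hgen α (mem_filter.2 ⟨hα, hnα⟩) γ (mem_filter.2 ⟨hγ, hnγ⟩)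
      hαγ (by simp only [a] at h ⊢; linarith)
  exact ⟨β, hβ, hnβ, D.hasWall_box hβ hx hband⟩

end ARDatum

theorem stmt12_general {r : ℕ} (D : ARDatum r)
    (I : Finset (Lr r))
    (lam : Lr r) (hlam : toV lam ∈ D.FundC)
    (w : ARDatum.G r) (hw : w ∈ D.Wp)
    (h1 : D.dot w (toV lam) ∈ D.CI I) (h2 : D.dot w (toV lam) ∈ D.XplusR)
    (h3 : 0 < D.dfn (D.dot w (toV lam))) :
    ∃ β ∈ D.pos, β ∉ ZI I ∧ D.nfl (D.dot w (toV lam)) β ≠ 0 ∧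
      D.HasWall (D.alcoveOf (D.dot w (toV lam))) β (D.nfl (D.dot w (toV lam)) β) := by
  set μ := D.dot w (toV lam)
  rw [D.FundC_eq_box_zero] at hlam
  have hμ : μ ∈ D.box (D.nfl μ) :=
    D.mem_box_nfl ((D.dot_mem_Reg_iff hw _).2 (D.box_subset_Reg 0 hlam))
  have hn : ∀ α ∈ D.pos, 0 ≤ D.nfl μ α := fun α hα => D.nfl_nonneg (h2.2 α hα)
  obtain ⟨α, hα, hnα⟩ := exists_lt_of_sum_lt (s := D.pos) (f := 0) (g := D.nfl μ)
    (by simpa [ARDatum.dfn] using h3)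
  obtain ⟨β, hβ, hnβ, hwall⟩ := D.exists_hasWall_box hμ hn ⟨α, hα, hnα⟩ ⟨_, hlam⟩
  refine ⟨β, hβ, fun hβI => ?_, hnβ.ne', hwall.mono (D.box_subset_alcoveOf hμ)⟩
  have := D.nfl_eq_zero (h1 β hβ hβI).1.le (h1 β hβ hβI).2
  omega

/-- If `w·λ ∈ C_I ∩ X₊` and `d(w·λ) > 0`, then there is `β ∈ Φ⁺ ∖ ℤI` with
`n_β(w·λ) ≠ 0` whose hyperplane `H_{β,n_β(w·λ)}` contains a wall of the alcove
containing `w·λ`. -/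
theorem stmt12 {r : ℕ} (D : ARDatum r)
    (I : Finset (Lr r)) (hI : I ⊆ D.simples)
    (lam : Lr r) (hlam : toV lam ∈ D.FundC)
    (hlamstab : ∀ g ∈ D.Wp, D.dot g (toV lam) = toV lam → g = 1)
    (w : ARDatum.G r) (hw : w ∈ D.Wp)
    (h1 : D.dot w (toV lam) ∈ D.CI I) (h2 : D.dot w (toV lam) ∈ D.XplusR)
    (h3 : 0 < D.dfn (D.dot w (toV lam))) :
    ∃ β ∈ D.pos, β ∉ ZI I ∧ D.nfl (D.dot w (toV lam)) β ≠ 0 ∧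
      D.HasWall (D.alcoveOf (D.dot w (toV lam))) β (D.nfl (D.dot w (toV lam)) β) :=
  stmt12_general D I lam hlam w hw h1 h2 h3

end
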